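/- The symmetry group G_f of a quasihomogeneous polynomial f and the one-parameter subgroup ℂ^* = {(λ^{q_1},…,λ^{q_n}) : λ ∈ ℂ^*} intersect exactly in the cyclic group of order d generated by the monodromy element h = (e^{2πi q_1/d},…,e^{2πi q_n/d}), provided the monomials occurring in f affinely generate the hyperplane {Σ q_i k_i = d} in ℤ^n. -/
import Mathlib


open MvPolynomial

/-- The symmetry group `G_f` of a quasihomogeneous polynomial `f` and the
one-parameter subgroup `ℂ^* = {(λ^{q₁},…,λ^{qₙ})}` intersect exactly in the cyclic group of
order `d` generated by the monodromy element `h = (e^{2πi q₁/d},…,e^{2πi qₙ/d})`, provided the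
monomials occurring in `f` affinely generate the hyperplane `{Σ qᵢ kᵢ = d}` in `ℤ^n`. -/
theorem symmetry_inter_Cstar_eq_monodromy_powers (n d : ℕ) (hd : 0 < d)
    (q : Fin n → ℕ) (hq : ∀ i, 0 < q i)
    (hgcd : (Finset.univ : Finset (Fin n)).gcd q = 1)
    (f : MvPolynomial (Fin n) ℂ) (hf0 : f ≠ 0)
    (hf : ∀ (l : ℂ) (x : Fin n → ℂ),
      eval (fun i => l ^ q i * x i) f = l ^ d * eval x f)
    -- the exponents of monomials occurring in `f` affinely generate the
    -- hyperplane `{k : Σ qᵢ kᵢ = d}`: every integer vector of quasidegree `0` is in the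
    -- subgroup generated by differences of exponents of monomials of `f`
    (hgen : ∀ v : Fin n → ℤ, (∑ i, (q i : ℤ) * v i = 0) →
      v ∈ AddSubgroup.closure
        {w : Fin n → ℤ | ∃ k ∈ f.support, ∃ k' ∈ f.support,
          w = fun i => (k i : ℤ) - (k' i : ℤ)}) :
    {g : Fin n → ℂ | (∀ x, eval (fun i => g i * x i) f = eval x f) ∧
        ∃ l : ℂ, l ≠ 0 ∧ g = fun i => l ^ q i}
      = {g | ∃ j : ℕ, g = fun i => Complex.exp (2 * Real.pi * Complex.I * q i / d) ^ j} := by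
  have hprim : IsPrimitiveRoot (Complex.exp (2 * Real.pi * Complex.I / d)) d :=
    Complex.isPrimitiveRoot_exp d hd.ne'
  have hexp : ∀ i : Fin n,
      Complex.exp (2 * Real.pi * Complex.I * q i / d)
        = Complex.exp (2 * Real.pi * Complex.I / d) ^ (q i) := by
    intro i
    rw [← Complex.exp_nat_mul]
    ring_nf
  ext g
  simp only [Set.mem_setOf_eq]
  constructor
  · rintro ⟨hsym, l, hl0, rfl⟩
    -- first show l^d = 1
    have hld : l ^ d = 1 := by
      by_contra h
      apply hf0
      apply MvPolynomial.funext
      intro x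
      have := hsym x
      rw [hf l x] at this
      have : (l ^ d - 1) * eval x f = 0 := by linear_combination this
      rcases mul_eq_zero.mp this with h1 | h2
      · exact absurd (sub_eq_zero.mp h1) h
      · simpa using h2
    have : NeZero d := ⟨hd.ne'⟩
    obtain ⟨j, _, hj⟩ := hprim.eq_pow_of_pow_eq_one hld
    refine ⟨j, ?_⟩
    funext i
    rw [hexp i, ← hj]
    rw [← pow_mul, ← pow_mul, Nat.mul_comm]
  · rintro ⟨j, rfl⟩
    set ζ := Complex.exp (2 * Real.pi * Complex.I / d) with hζ
    have hζd : ζ ^ d = 1 := hprim.pow_eq_one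
    refine ⟨?_, ζ ^ j, pow_ne_zero _ (Complex.exp_ne_zero _), ?_⟩
    · intro x
      have key : (fun i => Complex.exp (2 * Real.pi * Complex.I * q i / d) ^ j * x i)
          = fun i => (ζ ^ j) ^ q i * x i := by
        funext i
        rw [hexp i, ← pow_mul, ← pow_mul, Nat.mul_comm]
      rw [key, hf (ζ ^ j) x, ← pow_mul, Nat.mul_comm, pow_mul, hζd, one_pow, one_mul]
    · funext i
      rw [hexp i, ← pow_mul, ← pow_mul, Nat.mul_comm]
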